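/- In the cyclic Kautz digraph CK(d,3) with d ≥ 3, the distance from a vertex x₁x₂x₃ to the vertex x₃x₂y₃ (where y₃ ≠ x₂, x₃) is exactly 5. -/

import Mathlib

/-- Vertex of `CK(d,3)`: a triple with `x₁ ≠ x₂`, `x₂ ≠ x₃`, `x₁ ≠ x₃`. -/
abbrev ck3Vert {n : ℕ} (x : Fin 3 → Fin n) : Prop :=
  x 0 ≠ x 1 ∧ x 1 ≠ x 2 ∧ x 0 ≠ x 2

/-- Arc of `CK(d,3)`: `x₁x₂x₃ → x₂x₃y` with `y ≠ x₂, x₃`. -/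
abbrev ck3Adj {n : ℕ} (x y : Fin 3 → Fin n) : Prop :=
  y 0 = x 1 ∧ y 1 = x 2 ∧ y 2 ≠ x 1 ∧ y 2 ≠ x 2

/-- A walk of length `k` in `CK(d,3)` from `u` to `v`. -/
abbrev ck3Walk {n : ℕ} (k : ℕ) (u v : Fin 3 → Fin n) : Prop :=
  ∃ w : Fin (k + 1) → Fin 3 → Fin n, w 0 = u ∧ w (Fin.last k) = v ∧
    (∀ i, ck3Vert (w i)) ∧ ∀ i j : Fin (k + 1), j.val = i.val + 1 → ck3Adj (w i) (w j)

/-! A walk of length `k` is the same thing as a word `s₀ s₁ … s_{k+2}` in which any two letters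
at distance one or two differ, the `j`-th vertex being the window `s_j s_{j+1} s_{j+2}`.
With a fourth letter `b` the word `x₁ x₂ x₃ x₁ b x₃ x₂ y₃` is such a word of length `5 + 3`.
Conversely a word of length `k + 3 < 8` from `x₁x₂x₃` to `x₃x₂y₃` has `s_k = x₃ = s₂` and
`s_{k+1} = x₂ = s₁`: two equal letters at distance at most two, at positions `k, 2` if `k ≠ 2`
and at positions `1, 3` if `k = 2`. -/

lemma exists_ne_ne_ne_of_three_lt_card {α : Type*} [Fintype α]
    (h : 3 < Fintype.card α) (a b c : α) : ∃ e, e ≠ a ∧ e ≠ b ∧ e ≠ c := by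
  classical
  have hcard : ({a, b, c} : Finset α).card < (Finset.univ : Finset α).card :=
    Finset.card_le_three.trans_lt h
  obtain ⟨e, -, he⟩ := Finset.exists_mem_notMem_of_card_lt_card hcard
  simp only [Finset.mem_insert, Finset.mem_singleton, not_or] at he
  exact ⟨e, he⟩

lemma ck3Vert.injective {n : ℕ} {x : Fin 3 → Fin n} (hx : ck3Vert x) : Function.Injective x := by
  obtain ⟨h01, h12, h02⟩ := hx
  intro a b hab
  fin_cases a <;> fin_cases b <;> simp_all [eq_comm]

section Window

variable {n : ℕ}

def ck3Window (s : ℕ → Fin n) (j : ℕ) : Fin 3 → Fin n := fun a => s (j + a)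

def IsCK3Seq (k : ℕ) (s : ℕ → Fin n) : Prop := ∀ j ≤ k, ck3Vert (ck3Window s j)

lemma ck3Vert_ck3Window_iff {s : ℕ → Fin n} {j : ℕ} :
    ck3Vert (ck3Window s j) ↔ s j ≠ s (j + 1) ∧ s (j + 1) ≠ s (j + 2) ∧ s j ≠ s (j + 2) :=
  Iff.rfl

lemma ck3Adj_ck3Window_succ {s : ℕ → Fin n} {j : ℕ} (h : ck3Vert (ck3Window s (j + 1))) :
    ck3Adj (ck3Window s j) (ck3Window s (j + 1)) :=
  ⟨rfl, rfl, h.2.2.symm, h.2.1.symm⟩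

lemma IsCK3Seq.ne {k : ℕ} {s : ℕ → Fin n} (hs : IsCK3Seq k s) {i j : ℕ} (hij : i < j)
    (hji : j ≤ i + 2) (hjk : j ≤ k + 2) : s i ≠ s j := by
  intro h
  have key := (hs (min i k) (min_le_right i k)).injective
    (a₁ := ⟨i - min i k, by omega⟩) (a₂ := ⟨j - min i k, by omega⟩)
  simp only [ck3Window, Fin.mk.injEq] at key
  have := key (by rw [Nat.add_sub_cancel' (min_le_left i k), Nat.add_sub_cancel' (by omega)]; exact h)
  omega

lemma ck3Adj_chain_shift {k : ℕ} {w : Fin (k + 1) → Fin 3 → Fin n}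
    (hw : ∀ i j : Fin (k + 1), j.val = i.val + 1 → ck3Adj (w i) (w j))
    {i : ℕ} : ∀ {m a : ℕ} (him : i + m ≤ k) (ham : a + m ≤ 2),
    w ⟨i + m, by omega⟩ ⟨a, by omega⟩ = w ⟨i, by omega⟩ ⟨a + m, by omega⟩
  | 0, a, _, _ => rfl
  | m + 1, a, him, ham => by
    have hstep : w ⟨i + (m + 1), by omega⟩ ⟨a, by omega⟩ = w ⟨i + m, by omega⟩ ⟨a + 1, by omega⟩ := by
      obtain ⟨h0, h1, -⟩ := hw ⟨i + m, by omega⟩ ⟨i + m + 1, by omega⟩ rfl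
      obtain rfl | rfl : a = 0 ∨ a = 1 := by omega
      exacts [h0, h1]
    rw [hstep, ck3Adj_chain_shift hw (by omega) (by omega)]
    congr 2
    omega

lemma exists_isCK3Seq_of_ck3Walk {k : ℕ} {u v : Fin 3 → Fin n} (h : ck3Walk k u v) :
    ∃ s : ℕ → Fin n, IsCK3Seq k s ∧ ck3Window s 0 = u ∧ ck3Window s k = v := by
  obtain ⟨w, hu, hv, hvert, hadj⟩ := h
  set s : ℕ → Fin n := fun j => w ⟨min j k, by omega⟩ (Fin.ofNat 3 (j - min j k))
  have hwin : ∀ j (hj : j ≤ k), ck3Window s j = w ⟨j, by omega⟩ := by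
    intro j hj
    funext a
    have key := ck3Adj_chain_shift hadj (i := j) (m := min (j + a) k - j)
      (a := j + a - min (j + a) k) (by omega) (by omega)
    simp only [ck3Window, s]
    convert key using 2 <;> ext <;> simp only [Fin.val_ofNat] <;> omega
  refine ⟨s, fun j hj => hwin j hj ▸ hvert _, ?_, ?_⟩
  · rw [hwin 0 (Nat.zero_le k)]; exact hu
  · rw [hwin k le_rfl]; exact hv

theorem ck3Walk_iff_exists_isCK3Seq {k : ℕ} {u v : Fin 3 → Fin n} :
    ck3Walk k u v ↔ ∃ s : ℕ → Fin n, IsCK3Seq k s ∧ ck3Window s 0 = u ∧ ck3Window s k = v := by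
  refine ⟨exists_isCK3Seq_of_ck3Walk, ?_⟩
  rintro ⟨s, hs, rfl, rfl⟩
  refine ⟨fun i => ck3Window s i, rfl, rfl, fun i => hs i (Nat.lt_succ_iff.mp i.isLt), ?_⟩
  intro i j hij
  simp only [hij]
  exact ck3Adj_ck3Window_succ (hs _ (by omega))

end Window

/-- In `CK(d,3)` with `d ≥ 3`, the distance from a vertex `x₁x₂x₃` to the vertex
`x₃x₂y₃` (where `y₃ ≠ x₂, x₃`) is exactly `5`. -/
theorem stmt14 (d : ℕ) (hd : 3 ≤ d) (x y : Fin 3 → Fin (d + 1))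
    (hx : ck3Vert x) (hy0 : y 0 = x 2) (hy1 : y 1 = x 1)
    (hy2 : y 2 ≠ x 1) (hy2' : y 2 ≠ x 2) :
    ck3Walk 5 x y ∧ ∀ k < 5, ¬ ck3Walk k x y := by
  obtain ⟨h01, h12, h02⟩ := hx
  constructor
  · obtain ⟨b, hb0, hb1, hb2⟩ :=
      exists_ne_ne_ne_of_three_lt_card (by simpa using hd.trans_lt d.lt_succ_self) (x 0) (x 1) (x 2)
    let s : ℕ → Fin (d + 1) := fun j => [x 0, x 1, x 2, x 0, b, x 2, x 1, y 2].getD j b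
    have hs : IsCK3Seq 5 s := by
      intro j hj
      rw [ck3Vert_ck3Window_iff]
      interval_cases j <;> simp_all [s, eq_comm]
    have hsx : ck3Window s 0 = x := by
      funext a; fin_cases a <;> rfl
    have hsy : ck3Window s 5 = y := by
      funext a; fin_cases a <;> simp [ck3Window, s, hy0, hy1]
    exact ck3Walk_iff_exists_isCK3Seq.mpr ⟨s, hs, hsx, hsy⟩
  · rintro k hk hwalk
    obtain ⟨s, hs, rfl, hsy⟩ := ck3Walk_iff_exists_isCK3Seq.mp hwalk
    have hk2 : s k = s 2 := (congrFun hsy 0).trans hy0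
    have hk1 : s (k + 1) = s 1 := (congrFun hsy 1).trans hy1
    rcases lt_trichotomy k 2 with hlt | rfl | hgt
    · exact hs.ne hlt (by omega) (by omega) hk2
    · exact hs.ne (i := 1) (j := 3) (by omega) (by omega) (by omega) hk1.symm
    · exact hs.ne hgt (by omega) (by omega) hk2.symm
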